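/- Consider the recursions A_t = A_{t−1}(I − α_t w_t w_tᵀ) + α_t (g_t − b_{t−1}) w_tᵀ and b_t = (1 − β_t) b_{t−1} + β_t (g_t − A_{t−1} w_t), where ‖w_t‖₂ ≤ D_w, ‖g_t‖₂ ≤ D_G, 0 < α_t with S_α := Σ_{s=1}^∞ α_s < 1/D_w², and 0 < β_t ≤ 1 for all t. Then there exist constants D_A and D_b, independent of t, such that ‖A_t‖ ≤ D_A (spectral norm) and ‖b_t‖₂ ≤ D_b for all t. Explicitly, one may take D_b = max{‖b₀‖₂, (D_G(1 + S_α D_w²) + ‖A₀‖ D_w)/(1 − S_α D_w²)} and D_A = ‖A₀‖ + S_α D_w (D_b + D_G). -/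

import Mathlib

/-!
Induction on `t` with the joint invariant `‖b t‖ ≤ Db` and
`‖A t‖ ≤ ‖A 0‖ + (α 1 + ⋯ + α t) Dw (Db + DG)`. Since `α ‖w‖² ≤ S Dw² < 1`, the factor
`I - α w wᵀ` is a contraction, so each step adds at most `α Dw (Db + DG)` to `‖A‖`, and the partial
sums stay below `S`. The new `b` is a convex combination of the old one and `g - A w`, whose norm is
at most `DG + DA Dw`; the choice of `Db` makes this at most `Db`.
-/

/-- The outer product `u vᵀ` as a continuous linear map: `x ↦ ⟪v, x⟫ • u`. -/
noncomputable def outer {d : ℕ} (u v : EuclideanSpace ℝ (Fin d)) :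
    EuclideanSpace ℝ (Fin d) →L[ℝ] EuclideanSpace ℝ (Fin d) :=
  (innerSL ℝ v).smulRight u

open ContinuousLinearMap Finset

lemma norm_one_sub_smul_add_smul_le {E : Type*} [SeminormedAddCommGroup E] [NormedSpace ℝ E]
    {x y : E} {β D : ℝ} (hβ₀ : 0 ≤ β) (hβ₁ : β ≤ 1) (hx : ‖x‖ ≤ D) (hy : ‖y‖ ≤ D) :
    ‖(1 - β) • x + β • y‖ ≤ D := by
  rw [← mem_closedBall_zero_iff] at hx hy ⊢
  exact convex_closedBall 0 D hx hy (sub_nonneg.mpr hβ₁) hβ₀ (sub_add_cancel 1 β)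

section Outer

variable {d : ℕ}

lemma outer_apply (u v x : EuclideanSpace ℝ (Fin d)) : outer u v x = inner ℝ v x • u := rfl

lemma norm_outer (u v : EuclideanSpace ℝ (Fin d)) : ‖outer u v‖ = ‖v‖ * ‖u‖ := by
  rw [outer, norm_smulRight_apply, innerSL_apply_norm]

/-- `I - a w wᵀ` fixes `w⊥` and scales `w` by `1 - a ‖w‖² ∈ [0, 1]`. -/
lemma norm_id_sub_smul_outer_self_le_one (w : EuclideanSpace ℝ (Fin d)) {a : ℝ} (ha : 0 ≤ a)
    (haw : a * ‖w‖ ^ 2 ≤ 1) : ‖ContinuousLinearMap.id ℝ _ - a • outer w w‖ ≤ 1 := by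
  refine opNorm_le_bound _ zero_le_one fun x => ?_
  set c := inner ℝ w x
  have hx : (ContinuousLinearMap.id ℝ (EuclideanSpace ℝ (Fin d)) - a • outer w w) x
      = x - (a * c) • w := by
    rw [sub_apply, ContinuousLinearMap.id_apply, smul_apply, outer_apply, smul_smul]
  have hsq : ‖x - (a * c) • w‖ ^ 2 ≤ ‖x‖ ^ 2 := by
    rw [norm_sub_sq_real, real_inner_smul_right, real_inner_comm, norm_smul, mul_pow,
      Real.norm_eq_abs, sq_abs]
    nlinarith [mul_le_mul_of_nonneg_right haw (mul_nonneg ha (sq_nonneg c))]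
  rw [hx, one_mul]
  exact pow_le_pow_iff_left₀ (norm_nonneg _) (norm_nonneg _) two_ne_zero |>.mp hsq

lemma norm_comp_id_sub_smul_outer_add_smul_outer_le
    (M : EuclideanSpace ℝ (Fin d) →L[ℝ] EuclideanSpace ℝ (Fin d))
    (u w : EuclideanSpace ℝ (Fin d)) {a : ℝ} (ha : 0 ≤ a) (haw : a * ‖w‖ ^ 2 ≤ 1) :
    ‖M.comp (ContinuousLinearMap.id ℝ _ - a • outer w w) + a • outer u w‖
      ≤ ‖M‖ + a * (‖w‖ * ‖u‖) := by
  calc ‖M.comp (ContinuousLinearMap.id ℝ _ - a • outer w w) + a • outer u w‖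
      ≤ ‖M‖ * ‖ContinuousLinearMap.id ℝ _ - a • outer w w‖ + ‖a‖ * ‖outer u w‖ :=
        norm_add_le_of_le (opNorm_comp_le _ _) (norm_smul a _).le
    _ ≤ ‖M‖ * 1 + a * (‖w‖ * ‖u‖) := by
        rw [norm_outer, Real.norm_of_nonneg ha]
        gcongr
        exact norm_id_sub_smul_outer_self_le_one w ha haw
    _ = ‖M‖ + a * (‖w‖ * ‖u‖) := by rw [mul_one]

end Outer

theorem norm_le_of_recursion {d : ℕ} {α β : ℕ → ℝ} {Dw DG Db : ℝ}
    {w g b : ℕ → EuclideanSpace ℝ (Fin d)}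
    {A : ℕ → (EuclideanSpace ℝ (Fin d) →L[ℝ] EuclideanSpace ℝ (Fin d))}
    (hw : ∀ t, ‖w t‖ ≤ Dw) (hg : ∀ t, ‖g t‖ ≤ DG)
    (hα : ∀ t, 0 ≤ α (t + 1)) (hαDw : ∀ t, α (t + 1) * Dw ^ 2 ≤ 1)
    (hβ : ∀ t, 0 ≤ β (t + 1) ∧ β (t + 1) ≤ 1)
    (hA : ∀ t, A (t + 1) =
      (A t).comp (ContinuousLinearMap.id ℝ _ - α (t + 1) • outer (w (t + 1)) (w (t + 1)))
        + α (t + 1) • outer (g (t + 1) - b t) (w (t + 1)))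
    (hb : ∀ t, b (t + 1) =
      (1 - β (t + 1)) • b t + β (t + 1) • (g (t + 1) - A t (w (t + 1))))
    (hb₀ : ‖b 0‖ ≤ Db)
    (hDb : ∀ t, DG + (‖A 0‖ + (∑ s ∈ range t, α (s + 1)) * Dw * (Db + DG)) * Dw ≤ Db)
    (t : ℕ) :
    ‖b t‖ ≤ Db ∧ ‖A t‖ ≤ ‖A 0‖ + (∑ s ∈ range t, α (s + 1)) * Dw * (Db + DG) := by
  induction t with
  | zero => simpa using hb₀
  | succ t ih =>
    obtain ⟨ihb, ihA⟩ := ih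
    have hDw : 0 ≤ Dw := (norm_nonneg _).trans (hw 0)
    have hAw : ‖A t (w (t + 1))‖ ≤ (‖A 0‖ + (∑ s ∈ range t, α (s + 1)) * Dw * (Db + DG)) * Dw :=
      ((A t).le_opNorm_of_le (hw _)).trans (mul_le_mul_of_nonneg_right ihA hDw)
    have hαw : α (t + 1) * ‖w (t + 1)‖ ^ 2 ≤ 1 :=
      (mul_le_mul_of_nonneg_left (pow_le_pow_left₀ (norm_nonneg _) (hw _) 2) (hα t)).trans
        (hαDw t)
    have hgb : ‖g (t + 1) - b t‖ ≤ Db + DG :=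
      (norm_sub_le _ _).trans (by linarith [hg (t + 1)])
    constructor
    · rw [hb t]
      exact norm_one_sub_smul_add_smul_le (hβ t).1 (hβ t).2 ihb
        ((norm_sub_le _ _).trans (by linarith [hg (t + 1), hDb t]))
    · rw [hA t, sum_range_succ]
      calc _ ≤ ‖A t‖ + α (t + 1) * (‖w (t + 1)‖ * ‖g (t + 1) - b t‖) :=
            norm_comp_id_sub_smul_outer_add_smul_outer_le _ _ _ (hα t) hαw
        _ ≤ ‖A 0‖ + (∑ s ∈ range t, α (s + 1)) * Dw * (Db + DG)
              + α (t + 1) * (Dw * (Db + DG)) := by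
            gcongr
            · exact hα t
            · exact hw _
        _ = _ := by ring

theorem stmt_5_general {d : ℕ} (α β : ℕ → ℝ) (Dw DG : ℝ)
    (w g b : ℕ → EuclideanSpace ℝ (Fin d))
    (A : ℕ → (EuclideanSpace ℝ (Fin d) →L[ℝ] EuclideanSpace ℝ (Fin d)))
    (hw : ∀ t, ‖w t‖ ≤ Dw) (hg : ∀ t, ‖g t‖ ≤ DG)
    (hα : ∀ t, 0 < α (t + 1)) (hβ : ∀ t, 0 < β (t + 1) ∧ β (t + 1) ≤ 1)
    (hsum : Summable (fun s : ℕ => α (s + 1)))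
    (hSα : (∑' s : ℕ, α (s + 1)) < 1 / Dw ^ 2)
    (hA : ∀ t, A (t + 1) =
      (A t).comp (ContinuousLinearMap.id ℝ _ - α (t + 1) • outer (w (t + 1)) (w (t + 1)))
        + α (t + 1) • outer (g (t + 1) - b t) (w (t + 1)))
    (hb : ∀ t, b (t + 1) =
      (1 - β (t + 1)) • b t + β (t + 1) • (g (t + 1) - A t (w (t + 1)))) :
    ∃ DA Db : ℝ,
      Db = max ‖b 0‖
        ((DG * (1 + (∑' s : ℕ, α (s + 1)) * Dw ^ 2) + ‖A 0‖ * Dw)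
          / (1 - (∑' s : ℕ, α (s + 1)) * Dw ^ 2)) ∧
      DA = ‖A 0‖ + (∑' s : ℕ, α (s + 1)) * Dw * (Db + DG) ∧
      ∀ t, ‖A t‖ ≤ DA ∧ ‖b t‖ ≤ Db := by
  set S := ∑' s : ℕ, α (s + 1)
  refine ⟨_, _, rfl, rfl, ?_⟩
  set Db := max ‖b 0‖ ((DG * (1 + S * Dw ^ 2) + ‖A 0‖ * Dw) / (1 - S * Dw ^ 2))
  have hDw : 0 ≤ Dw := (norm_nonneg _).trans (hw 0)
  have hDG : 0 ≤ DG := (norm_nonneg _).trans (hg 0)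
  have hαS : ∀ t, α (t + 1) ≤ S := fun t => hsum.le_tsum t fun s _ => (hα s).le
  have hpartial : ∀ t, ∑ s ∈ range t, α (s + 1) ≤ S := fun t =>
    hsum.sum_le_tsum _ fun s _ => (hα s).le
  have hSDw : S * Dw ^ 2 < 1 := by
    rcases hDw.eq_or_lt with h | h
    · simp [← h]
    · rwa [lt_div_iff₀ (by positivity)] at hSα
  -- `Db` is chosen so that `‖g - A w‖ ≤ DG + DA * Dw ≤ Db`, although `DA` itself depends on `Db`
  have hkey : DG + (‖A 0‖ + S * Dw * (Db + DG)) * Dw ≤ Db := by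
    have h := le_max_right ‖b 0‖ ((DG * (1 + S * Dw ^ 2) + ‖A 0‖ * Dw) / (1 - S * Dw ^ 2))
    rw [div_le_iff₀ (by linarith)] at h
    linear_combination h
  have hmono : ∀ t, ‖A 0‖ + (∑ s ∈ range t, α (s + 1)) * Dw * (Db + DG)
      ≤ ‖A 0‖ + S * Dw * (Db + DG) := fun t => by gcongr; exact hpartial t
  have hbound := norm_le_of_recursion hw hg (fun t => (hα t).le)
    (fun t => (mul_le_mul_of_nonneg_right (hαS t) (sq_nonneg Dw)).trans hSDw.le)
    (fun t => ⟨(hβ t).1.le, (hβ t).2⟩) hA hb (le_max_left _ _)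
    (fun t => le_trans (by gcongr; exact hpartial t) hkey)
  exact fun t => ⟨(hbound t).2.trans (hmono t), (hbound t).1⟩

theorem stmt_5 {d : ℕ} (α β : ℕ → ℝ) (Dw DG : ℝ) (hDw : 0 < Dw)
    (w g b : ℕ → EuclideanSpace ℝ (Fin d))
    (A : ℕ → (EuclideanSpace ℝ (Fin d) →L[ℝ] EuclideanSpace ℝ (Fin d)))
    (hw : ∀ t, ‖w t‖ ≤ Dw) (hg : ∀ t, ‖g t‖ ≤ DG)
    (hα : ∀ t, 0 < α (t + 1)) (hβ : ∀ t, 0 < β (t + 1) ∧ β (t + 1) ≤ 1)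
    (hsum : Summable (fun s : ℕ => α (s + 1)))
    (hSα : (∑' s : ℕ, α (s + 1)) < 1 / Dw ^ 2)
    (hA : ∀ t, A (t + 1) =
      (A t).comp (ContinuousLinearMap.id ℝ _ - α (t + 1) • outer (w (t + 1)) (w (t + 1)))
        + α (t + 1) • outer (g (t + 1) - b t) (w (t + 1)))
    (hb : ∀ t, b (t + 1) =
      (1 - β (t + 1)) • b t + β (t + 1) • (g (t + 1) - A t (w (t + 1)))) :
    ∃ DA Db : ℝ,
      Db = max ‖b 0‖
        ((DG * (1 + (∑' s : ℕ, α (s + 1)) * Dw ^ 2) + ‖A 0‖ * Dw)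
          / (1 - (∑' s : ℕ, α (s + 1)) * Dw ^ 2)) ∧
      DA = ‖A 0‖ + (∑' s : ℕ, α (s + 1)) * Dw * (Db + DG) ∧
      ∀ t, ‖A t‖ ≤ DA ∧ ‖b t‖ ≤ Db :=
  stmt_5_general α β Dw DG w g b A hw hg hα hβ hsum hSα hA hb
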